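/- For every R > 0 there exist c > 0 and θ₀ ∈ (0, 1) such that for every θ ∈ (0, θ₀], ∫_{ℝ^d} |T_θ(x) − T_0(x)|² dρ(x) ≥ c/|log(θ/4)|. In particular, for every α > 0, the ratio (∫ |T_θ − T_0|² dρ)/θ^α tends to +∞ as θ → 0⁺. -/

import Mathlib

open MeasureTheory Metric
open scoped ENNReal

section aux
variable {d : ℕ}

lemma aux_coord_le (x : EuclideanSpace ℝ (Fin d)) (i : Fin d) : |x i| ≤ ‖x‖ := by
  have h : x i = (inner ℝ (EuclideanSpace.single i (1:ℝ)) x : ℝ) := by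
    rw [EuclideanSpace.inner_single_left]; simp
  rw [h]
  calc |(inner ℝ (EuclideanSpace.single i (1:ℝ)) x : ℝ)| ≤ ‖EuclideanSpace.single i (1:ℝ)‖ * ‖x‖ :=
        abs_real_inner_le_norm _ _
    _ = ‖x‖ := by simp

lemma aux_norm_sq {i j : Fin d} (hij : i ≠ j) (a b : ℝ) :
    ‖EuclideanSpace.single i a + EuclideanSpace.single j b‖ ^ 2 = a ^ 2 + b ^ 2 := by
  rw [norm_add_sq_real]
  have : (inner ℝ (EuclideanSpace.single i a) (EuclideanSpace.single j b) : ℝ) = 0 := by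
    rw [EuclideanSpace.inner_single_left]
    simp [EuclideanSpace.single_apply, hij]
  simp [this, EuclideanSpace.norm_single, sq_abs]

lemma aux_inner (i j : Fin d) (a b : ℝ) (x : EuclideanSpace ℝ (Fin d)) :
    (inner ℝ x (EuclideanSpace.single i a + EuclideanSpace.single j b) : ℝ) = a * x i + b * x j := by
  rw [inner_add_right, EuclideanSpace.inner_single_right, EuclideanSpace.inner_single_right]
  simp [mul_comm]

lemma aux_le_infDist {X : Type*} [MetricSpace X] (x a b : X) (m : ℝ)
    (ha : m ≤ dist x a) (hb : m ≤ dist x b) : m ≤ Metric.infDist x {a, b} := by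
  rw [Metric.infDist_eq_iInf]
  haveI : Nonempty ↥({a, b} : Set X) := ⟨⟨a, by simp⟩⟩
  apply le_ciInf
  rintro ⟨y, hy | hy⟩
  · subst hy; exact ha
  · simp only [Set.mem_singleton_iff] at hy; subst hy; exact hb

/-- Facts about points of the small balls used in the shell argument. -/
lemma aux_ball {i0 i1 : Fin d} (hi01 : i0 ≠ i1) {s : ℝ} (hs0 : 0 < s) (hs8 : s ≤ 1/8)
    {y : EuclideanSpace ℝ (Fin d)}
    (hy : dist y (EuclideanSpace.single i0 (1 - 3*s/5) + EuclideanSpace.single i1 (-(9*s/20))) ≤ s/8) :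
    5*s/8 ≤ dist y (EuclideanSpace.single i0 (1:ℝ)) ∧
    dist y (EuclideanSpace.single i0 (1:ℝ)) ≤ 7*s/8 ∧
    ‖y‖ ≤ 1 ∧ -s ≤ y i1 ∧ y i1 ≤ 0 ∧ 1/2 ≤ y i0 := by
  set C := EuclideanSpace.single i0 (1 - 3*s/5) + EuclideanSpace.single i1 (-(9*s/20)) with hC
  set A := EuclideanSpace.single i0 (1:ℝ) with hA
  have hdiff : C - A = EuclideanSpace.single i0 (-(3*s/5)) + EuclideanSpace.single i1 (-(9*s/20)) := by
    ext j
    simp only [hC, hA, PiLp.sub_apply, PiLp.add_apply, EuclideanSpace.single_apply]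
    split_ifs <;> ring
  have hCA : dist C A = 3*s/4 := by
    have h2 : dist C A ^ 2 = (3*s/4)^2 := by
      rw [dist_eq_norm, hdiff, aux_norm_sq hi01]; ring
    have h3 := congrArg Real.sqrt h2
    rwa [Real.sqrt_sq dist_nonneg, Real.sqrt_sq (by positivity)] at h3
  have hCn2 : ‖C‖^2 = (1 - 3*s/5)^2 + (9*s/20)^2 := by
    rw [hC, aux_norm_sq hi01]; ring
  have hCnorm : ‖C‖ ≤ 1 - s/8 := by
    have h3 : ‖C‖^2 ≤ (1 - s/8)^2 := by nlinarith
    have h4 := Real.sqrt_le_sqrt h3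
    rwa [Real.sqrt_sq (norm_nonneg _), Real.sqrt_sq (by linarith)] at h4
  have hcoord : ∀ i, |y i - C i| ≤ s/8 := by
    intro i
    have h := aux_coord_le (y - C) i
    have h2 : (y - C) i = y i - C i := rfl
    rw [h2] at h
    rw [dist_eq_norm] at hy
    linarith
  have hCi0 : C i0 = 1 - 3*s/5 := by
    simp [hC, EuclideanSpace.single_apply, hi01, hi01.symm]
  have hCi1 : C i1 = -(9*s/20) := by
    simp [hC, EuclideanSpace.single_apply, hi01, hi01.symm]
  have h1 := hcoord i0
  have h2 := hcoord i1
  rw [hCi0] at h1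
  rw [hCi1] at h2
  rw [abs_le] at h1 h2
  have hyC : dist y C ≤ s/8 := hy
  refine ⟨?_, ?_, ?_, by linarith [h2.1], by linarith [h2.2], by linarith [h1.1]⟩
  · have ht := dist_triangle C y A
    rw [dist_comm C y] at ht
    linarith [hCA ▸ ht]
  · have ht := dist_triangle y C A
    linarith [ht, hCA]
  · have h5 : ‖y‖ ≤ ‖y - C‖ + ‖C‖ := by
      calc ‖y‖ = ‖(y - C) + C‖ := by rw [sub_add_cancel]
        _ ≤ ‖y - C‖ + ‖C‖ := norm_add_le _ _
    rw [← dist_eq_norm] at h5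
    linarith

end aux

lemma aux_dist_sq (R θ : ℝ) (hθ0 : 0 ≤ θ) (hθ1 : θ ≤ 1/2) :
    R^2 ≤ (R*Real.sin θ + R*Real.sin 0)^2 + (R*Real.cos θ + R*Real.cos 0)^2 := by
  have hcos0 : 0 ≤ Real.cos θ := by
    apply Real.cos_nonneg_of_mem_Icc
    constructor
    · linarith [Real.pi_gt_three]
    · linarith [Real.pi_gt_three]
  simp only [Real.sin_zero, Real.cos_zero]
  nlinarith [Real.sin_sq_add_cos_sq θ, sq_nonneg R, sq_nonneg (Real.sin θ)]

lemma aux_real_ineq (P Lg : ℝ) (K : ℕ) (hP : 0 < P) (hLg : 0 < Lg)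
    (hKub : (K:ℝ) + 1 ≤ 3 * Lg) :
    P/12/Lg ≤ P * ((2*(K:ℝ)+1)^2)⁻¹ * ((K:ℝ)+1) := by
  have hK1 : (0:ℝ) < (K:ℝ)+1 := by positivity
  have h12 : P/12/Lg = P/(12*Lg) := by rw [div_div]
  rw [h12, div_le_iff₀ (by positivity : (0:ℝ) < 12*Lg)]
  have key2 : (2*(K:ℝ)+1)^2 ≤ 12 * Lg * ((K:ℝ)+1) := by nlinarith
  have hu : (0:ℝ) ≤ ((2*(K:ℝ)+1)^2)⁻¹ := by positivity
  have h5 : 1 ≤ ((2*(K:ℝ)+1)^2)⁻¹ * (12 * Lg * ((K:ℝ)+1)) := by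
    calc (1:ℝ) = ((2*(K:ℝ)+1)^2)⁻¹ * (2*(K:ℝ)+1)^2 := (inv_mul_cancel₀ (by positivity)).symm
      _ ≤ ((2*(K:ℝ)+1)^2)⁻¹ * (12 * Lg * ((K:ℝ)+1)) := mul_le_mul_of_nonneg_left key2 hu
  calc P = P * 1 := (mul_one _).symm
    _ ≤ P * (((2*(K:ℝ)+1)^2)⁻¹ * (12 * Lg * ((K:ℝ)+1))) := mul_le_mul_of_nonneg_left h5 hP.le
    _ = P * ((2*(K:ℝ)+1)^2)⁻¹ * ((K:ℝ)+1) * (12*Lg) := by ring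

set_option maxHeartbeats 10000000 in
/-- For every `R > 0` there exist `c > 0` and `θ₀ ∈ (0,1)` such that for all
`θ ∈ (0, θ₀]`, `∫ |T_θ - T_0|² dρ ≥ c/|log(θ/4)|`; in particular, for every `α > 0` the
ratio `(∫ |T_θ - T_0|² dρ)/θ^α` tends to `+∞` as `θ → 0⁺`. -/
theorem stmt8 (d : ℕ) (hd : 2 ≤ d)
    (A A' : EuclideanSpace ℝ (Fin d))
    (hA : A = EuclideanSpace.single (⟨0, by omega⟩ : Fin d) (1 : ℝ))
    (hA' : A' = EuclideanSpace.single (⟨0, by omega⟩ : Fin d) (-1 : ℝ))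
    (E : Set (EuclideanSpace ℝ (Fin d))) (hE : E = {A, A'})
    (f : ℝ → ℝ)
    (hf : f = fun r => r ^ (-(d : ℝ)) * min 1 ((Real.log r) ^ 2)⁻¹)
    (c₀ : ℝ) (hc₀ : 0 < c₀)
    (ρ : Measure (EuclideanSpace ℝ (Fin d)))
    (hρ : ρ = volume.withDensity
      ((closedBall (0 : EuclideanSpace ℝ (Fin d)) 1).indicator
        fun x => ENNReal.ofReal (c₀ * f (infDist x E))))
    (hprob : IsProbabilityMeasure ρ)
    (R : ℝ) (hR : 0 < R)
    (B : ℝ → EuclideanSpace ℝ (Fin d))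
    (hB : ∀ t : ℝ, B t =
      EuclideanSpace.single (⟨0, by omega⟩ : Fin d) (R * Real.sin t) +
      EuclideanSpace.single (⟨1, by omega⟩ : Fin d) (R * Real.cos t))
    (T : ℝ → EuclideanSpace ℝ (Fin d) → EuclideanSpace ℝ (Fin d))
    (hT : ∀ t x, T t x = if 0 < (inner ℝ x (B t) : ℝ) then B t else -(B t)) :
    (∃ c : ℝ, 0 < c ∧ ∃ θ₀ ∈ Set.Ioo (0 : ℝ) 1, ∀ θ ∈ Set.Ioc (0 : ℝ) θ₀,
      ENNReal.ofReal (c / |Real.log (θ / 4)|) ≤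
        ∫⁻ x, ENNReal.ofReal (dist (T θ x) (T 0 x) ^ 2) ∂ρ) ∧
    ∀ α : ℝ, 0 < α →
      Filter.Tendsto
        (fun θ : ℝ =>
          (∫⁻ x, ENNReal.ofReal (dist (T θ x) (T 0 x) ^ 2) ∂ρ).toReal / θ ^ α)
        (nhdsWithin 0 (Set.Ioi 0)) Filter.atTop := by
  classical
  obtain ⟨i0, i1, hi01, hA1, hA1', hB1⟩ :
      ∃ i0 i1 : Fin d, i0 ≠ i1 ∧ A = EuclideanSpace.single i0 (1:ℝ) ∧
        A' = EuclideanSpace.single i0 (-1:ℝ) ∧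
        ∀ t : ℝ, B t = EuclideanSpace.single i0 (R * Real.sin t) +
          EuclideanSpace.single i1 (R * Real.cos t) :=
    ⟨⟨0, by omega⟩, ⟨1, by omega⟩, by simp [Fin.ext_iff], hA, hA', hB⟩
  clear hA hA' hB
  have hinner : ∀ (t : ℝ) (x : EuclideanSpace ℝ (Fin d)),
      (inner ℝ x (B t) : ℝ) = R * Real.sin t * x i0 + R * Real.cos t * x i1 := by
    intro t x
    rw [hB1 t]
    exact aux_inner i0 i1 _ _ x
  haveI hnt : Nontrivial (EuclideanSpace ℝ (Fin d)) := by
    refine ⟨A, A', fun h => ?_⟩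
    rw [hA1, hA1'] at h
    have h2 := congrArg (fun v : EuclideanSpace ℝ (Fin d) => v i0) h
    simp [EuclideanSpace.single_apply] at h2
    norm_num at h2
  set ω' : ℝ := (volume (ball (0 : EuclideanSpace ℝ (Fin d)) 1)).toReal with hω'
  have hωpos : 0 < ω' :=
    ENNReal.toReal_pos (measure_ball_pos _ _ one_pos).ne' measure_ball_lt_top.ne
  have hωeq : volume (ball (0 : EuclideanSpace ℝ (Fin d)) 1) = ENNReal.ofReal ω' :=
    (ENNReal.ofReal_toReal measure_ball_lt_top.ne).symm
  have hlog2 : (0.6931471803 : ℝ) < Real.log 2 := Real.log_two_gt_d9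
  have hlog2pos : (0:ℝ) < Real.log 2 := by linarith
  set c₁ : ℝ := c₀ / (8^d * (Real.log 2)^2) with hc₁def
  have hc₁pos : 0 < c₁ := div_pos hc₀ (mul_pos (by positivity) (pow_pos hlog2pos 2))
  set c : ℝ := R^2 * c₁ * ω' / 12 with hcdef
  have hcpos : 0 < c := by positivity
  -- volume of the small balls
  have hvol : ∀ (x : EuclideanSpace ℝ (Fin d)) (r : ℝ), 0 ≤ r →
      volume (ball x r) = ENNReal.ofReal (r ^ d) * ENNReal.ofReal ω' := by
    intro x r hr
    rw [Measure.addHaar_ball volume x hr, finrank_euclideanSpace_fin, hωeq]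

  have hmain : ∀ θ ∈ Set.Ioc (0:ℝ) (1/2 : ℝ),
      ENNReal.ofReal (c / |Real.log (θ / 4)|) ≤
        ∫⁻ x, ENNReal.ofReal (dist (T θ x) (T 0 x) ^ 2) ∂ρ := by
    rintro θ ⟨hθ0, hθh⟩
    have hθ1 : θ ≤ 1 := by linarith
    set Lg : ℝ := |Real.log (θ / 4)| with hLgdef
    have hlogneg : Real.log (θ/4) < 0 := Real.log_neg (by positivity) (by linarith)
    have hLgeq : Lg = Real.log (4/θ) := by
      rw [hLgdef, abs_of_neg hlogneg, ← Real.log_inv, inv_div]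
    have hLg2 : (2:ℝ) ≤ Lg := by
      have h8θ : (8:ℝ) ≤ 4/θ := by rw [le_div_iff₀ hθ0]; linarith
      have hl8 : Real.log 8 = 3 * Real.log 2 := by
        rw [show (8:ℝ) = 2^(3:ℕ) by norm_num, Real.log_pow]; push_cast; ring
      have := Real.log_le_log (by norm_num : (0:ℝ) < 8) h8θ
      rw [hLgeq]; linarith
    have hLgpos : (0:ℝ) < Lg := by linarith
    set K : ℕ := ⌈Real.logb 2 (4/θ)⌉₊ with hKdef
    have hlogbnn : 0 ≤ Real.logb 2 (4/θ) := by
      apply Real.logb_nonneg (by norm_num)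
      rw [le_div_iff₀ hθ0]; linarith
    have hK3 : 3 ≤ K := by
      have h2lt : (2:ℝ) < Real.logb 2 (4/θ) := by
        rw [Real.lt_logb_iff_rpow_lt (by norm_num) (by positivity)]
        have h4 : (2:ℝ) ^ (2:ℝ) = 4 := by
          rw [show (2:ℝ) = ((2:ℕ):ℝ) from by norm_num, Real.rpow_natCast]; norm_num
        rw [h4, lt_div_iff₀ hθ0]; nlinarith
      have h2lt' : (2:ℕ) < K := Nat.lt_ceil.mpr (by exact_mod_cast h2lt)
      omega
    have hsK : ((2:ℝ)^K)⁻¹ ≤ θ/4 := by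
      have h1 : Real.logb 2 (4/θ) ≤ (K:ℝ) := Nat.le_ceil _
      have h2 : 4/θ ≤ (2:ℝ)^(K:ℝ) := (Real.logb_le_iff_le_rpow (by norm_num) (by positivity)).mp h1
      rw [Real.rpow_natCast] at h2
      have h3 : θ/4 = (4/θ)⁻¹ := by rw [inv_div]
      rw [h3]
      exact inv_anti₀ (by positivity) h2
    have hKub : (K:ℝ) + 1 ≤ 3 * Lg := by
      have h1 : (K:ℝ) < Real.logb 2 (4/θ) + 1 := Nat.ceil_lt_add_one hlogbnn
      have h2 : Real.logb 2 (4/θ) = Lg / Real.log 2 := by rw [hLgeq, Real.logb]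
      have h3 : Lg / Real.log 2 ≤ 2 * Lg := by
        rw [div_le_iff₀ hlog2pos]; nlinarith
      linarith
    set F : Finset ℕ := Finset.Icc K (2*K) with hFdef
    set sk : ℕ → ℝ := fun k => ((2:ℝ)^k)⁻¹ with hskdef
    have hsk0 : ∀ k, 0 < sk k := fun k => by simp only [hskdef]; positivity
    set Ctr : ℕ → EuclideanSpace ℝ (Fin d) := fun k =>
      EuclideanSpace.single i0 (1 - 3*(sk k)/5) + EuclideanSpace.single i1 (-(9*(sk k)/20)) with hCtrdef
    set bl : ℕ → Set (EuclideanSpace ℝ (Fin d)) := fun k => ball (Ctr k) (sk k/8) with hbldef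
    set Gk : ℕ → ℝ := fun k => c₀ * ((2:ℝ)^k)^d * ((((k:ℝ)+1)*Real.log 2)^2)⁻¹ with hGkdef
    have hGknn : ∀ k, 0 ≤ Gk k := fun k => by
      simp only [hGkdef]
      have : (0:ℝ) < ((k:ℝ)+1) * Real.log 2 := by positivity
      positivity
    have hskmono : ∀ a b : ℕ, a ≤ b → sk b ≤ sk a := by
      intro a b hab
      simp only [hskdef]
      gcongr
      norm_num
    have hskF : ∀ k ∈ F, sk k ≤ θ/4 := by
      intro k hk
      have hKk : K ≤ k := (Finset.mem_Icc.mp hk).1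
      have := hskmono K k hKk
      simp only [hskdef] at this ⊢
      linarith [hsK]
    have hsk8 : ∀ k ∈ F, sk k ≤ 1/8 := fun k hk => le_trans (hskF k hk) (by linarith)
    -- facts about points of the small balls
    have hballmem : ∀ k ∈ F, ∀ y ∈ bl k,
        5*(sk k)/8 ≤ dist y A ∧ dist y A ≤ 7*(sk k)/8 ∧
        ‖y‖ ≤ 1 ∧ -(sk k) ≤ y i1 ∧ y i1 ≤ 0 ∧ 1/2 ≤ y i0 := by
      intro k hk y hy
      simp only [hbldef] at hy
      have hy' : dist y (Ctr k) ≤ sk k / 8 := (mem_ball.mp hy).le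
      rw [hCtrdef] at hy'
      have := aux_ball hi01 (hsk0 k) (hsk8 k hk) hy'
      rw [← hA1] at this
      exact ⟨this.1, this.2.1, this.2.2.1, this.2.2.2.1, this.2.2.2.2.1, this.2.2.2.2.2⟩
    set W : Set (EuclideanSpace ℝ (Fin d)) :=
      {x | (inner ℝ x (B 0) : ℝ) ≤ 0 ∧ 0 < (inner ℝ x (B θ) : ℝ)} with hWdef
    have hcont : ∀ t : ℝ, Continuous fun x : EuclideanSpace ℝ (Fin d) => (inner ℝ x (B t) : ℝ) :=
      fun t => continuous_id.inner continuous_const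
    have hWmeas : MeasurableSet W := by
      rw [hWdef, Set.setOf_and]
      exact (measurableSet_le ((hcont 0).measurable) measurable_const).inter
        (measurableSet_lt measurable_const ((hcont θ).measurable))
    have hWsub : ∀ k ∈ F, bl k ⊆ W := by
      intro k hk y hy
      obtain ⟨hd1, hd2, hn, hi1l, hi1u, hi0l⟩ := hballmem k hk y hy
      simp only [hWdef, Set.mem_setOf_eq]
      constructor
      · rw [hinner 0 y]
        simp only [Real.sin_zero, Real.cos_zero, mul_zero, zero_mul, mul_one, zero_add]
        exact mul_nonpos_of_nonneg_of_nonpos hR.le hi1u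
      · rw [hinner θ y]
        have hsin : 3*θ/4 ≤ Real.sin θ := by
          have h3 := Real.sin_gt_sub_cube hθ0
          have hcube : θ^3 ≤ θ := by nlinarith [mul_nonneg (mul_nonneg hθ0.le hθ0.le) (sub_nonneg.mpr hθ1)]
          linarith
        have hsinnn : 0 ≤ Real.sin θ := by linarith
        have hcos0 : 0 ≤ Real.cos θ := by
          apply Real.cos_nonneg_of_mem_Icc
          constructor
          · linarith [Real.pi_gt_three]
          · linarith [Real.pi_gt_three]
        have hcos1 : Real.cos θ ≤ 1 := Real.cos_le_one θ
        have hskθ : sk k ≤ θ/4 := hskF k hk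
        have e1 : (3*θ/4) * (1/2) ≤ Real.sin θ * y i0 := by
          apply mul_le_mul hsin hi0l (by norm_num) hsinnn
        have e2 : -(θ/4) ≤ Real.cos θ * y i1 := by nlinarith
        have e3 : θ/8 ≤ Real.sin θ * y i0 + Real.cos θ * y i1 := by linarith
        have e4 := mul_le_mul_of_nonneg_left e3 hR.le
        nlinarith [e4]
    -- density lower bound on the balls
    have hGle : ∀ k ∈ F, ∀ y ∈ bl k,
        ENNReal.ofReal (Gk k) ≤
          ((closedBall (0:EuclideanSpace ℝ (Fin d)) 1).indicator
            fun x => ENNReal.ofReal (c₀ * f (infDist x E))) y := by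
      intro k hk y hy
      obtain ⟨hd1, hd2, hn, hi1l, hi1u, hi0l⟩ := hballmem k hk y hy
      have hymem : y ∈ closedBall (0:EuclideanSpace ℝ (Fin d)) 1 := by
        rw [mem_closedBall_zero_iff]; exact hn
      rw [Set.indicator_of_mem hymem]
      apply ENNReal.ofReal_le_ofReal
      have hkK := Finset.mem_Icc.mp hk
      have hk3 : 3 ≤ k := le_trans hK3 hkK.1
      have hs0 := hsk0 k
      have hs8 := hsk8 k hk
      have hrub : infDist y E ≤ 7 * sk k / 8 := by
        rw [hE]
        exact le_trans (infDist_le_dist_of_mem (Set.mem_insert A _)) hd2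
      have hyA' : 1 ≤ dist y A' := by
        have hAA' : dist A A' = 2 := by
          rw [hA1, hA1', EuclideanSpace.dist_single_same, Real.dist_eq]; norm_num
        have ht := dist_triangle A y A'
        rw [dist_comm A y] at ht
        linarith
      have hrlb : 5 * sk k / 8 ≤ infDist y E := by
        rw [hE]
        exact aux_le_infDist y A A' _ hd1 (by linarith)
      set r : ℝ := infDist y E with hrdef
      have hr0 : 0 < r := lt_of_lt_of_le (by positivity) hrlb
      have hrs : r ≤ sk k := le_trans hrub (by linarith)
      have hr1 : r < 1 := lt_of_le_of_lt hrs (by linarith)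
      have hlogr : Real.log r < 0 := Real.log_neg hr0 hr1
      rw [hf]
      simp only
      have hrw : r ^ (-(d:ℝ)) = (r^d)⁻¹ := by
        rw [Real.rpow_neg hr0.le, Real.rpow_natCast]
      have h2 : ((2:ℝ)^k)^d ≤ (r^d)⁻¹ := by
        have ha : r^d ≤ (sk k)^d := pow_le_pow_left₀ hr0.le hrs d
        have hb : (sk k)^d = (((2:ℝ)^k)^d)⁻¹ := by simp only [hskdef]; rw [inv_pow]
        rw [hb] at ha
        calc ((2:ℝ)^k)^d = ((((2:ℝ)^k)^d)⁻¹)⁻¹ := by rw [inv_inv]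
          _ ≤ (r^d)⁻¹ := inv_anti₀ (by positivity) ha
      have hk1log : (1:ℝ) ≤ ((k:ℝ)+1) * Real.log 2 := by
        have hkc : (3:ℝ) ≤ (k:ℝ) := by exact_mod_cast hk3
        nlinarith
      have h3 : ((((k:ℝ)+1) * Real.log 2)^2)⁻¹ ≤ min 1 ((Real.log r)^2)⁻¹ := by
        refine le_min ?_ ?_
        · rw [← one_div]
          apply div_le_one_of_le₀ (by nlinarith) (by positivity)
        · have hs2 : ((2:ℝ)^(k+1))⁻¹ ≤ r := by
            have he : ((2:ℝ)^(k+1))⁻¹ = sk k / 2 := by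
              simp only [hskdef]; rw [pow_succ]; field_simp
            rw [he]; linarith
          have hlb : -(((k:ℝ)+1) * Real.log 2) ≤ Real.log r := by
            calc -(((k:ℝ)+1) * Real.log 2) = Real.log (((2:ℝ)^(k+1))⁻¹) := by
                  rw [Real.log_inv, Real.log_pow]; push_cast; ring
              _ ≤ Real.log r := Real.log_le_log (by positivity) hs2
          have hsq : (Real.log r)^2 ≤ (((k:ℝ)+1) * Real.log 2)^2 := by nlinarith
          have hpos : 0 < (Real.log r)^2 := by nlinarith [mul_pos (neg_pos.mpr hlogr) (neg_pos.mpr hlogr)]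
          exact inv_anti₀ hpos hsq
      have h4 := mul_le_mul h2 h3 (by positivity) (by positivity)
      calc Gk k = c₀ * (((2:ℝ)^k)^d * ((((k:ℝ)+1)*Real.log 2)^2)⁻¹) := by
            simp only [hGkdef]; ring
        _ ≤ c₀ * ((r^d)⁻¹ * min 1 ((Real.log r)^2)⁻¹) := mul_le_mul_of_nonneg_left h4 hc₀.le
        _ = c₀ * (r ^ (-(d:ℝ)) * min 1 ((Real.log r)^2)⁻¹) := by rw [hrw]
    -- pairwise disjointness of the balls
    have hdisj : (↑F : Set ℕ).PairwiseDisjoint bl := by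
      have key : ∀ a ∈ F, ∀ b ∈ F, a < b → Disjoint (bl a) (bl b) := by
        intro a ha b hb hab
        rw [Set.disjoint_left]
        intro y hya hyb
        obtain ⟨ha1, ha2, -⟩ := hballmem a ha y hya
        obtain ⟨hb1, hb2, -⟩ := hballmem b hb y hyb
        have hhalf : sk b ≤ sk a / 2 := by
          have h1 : sk b ≤ sk (a+1) := hskmono (a+1) b hab
          have h2 : sk (a+1) = sk a / 2 := by
            simp only [hskdef]; rw [pow_succ]; field_simp
          linarith
        have := hsk0 a
        linarith
      intro a ha b hb hab
      rcases lt_or_gt_of_ne hab with h | h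
      · exact key a ha b hb h
      · exact (key b hb a ha h).symm
    -- measure of each ball under ρ
    have hρball : ∀ k ∈ F, ENNReal.ofReal (Gk k) * volume (bl k) ≤ ρ (bl k) := by
      intro k hk
      rw [hρ, withDensity_apply _ (measurableSet_ball : MeasurableSet (bl k))]
      calc ENNReal.ofReal (Gk k) * volume (bl k)
          = ∫⁻ _ in bl k, ENNReal.ofReal (Gk k) ∂volume := by rw [setLIntegral_const]
        _ ≤ ∫⁻ y in bl k, ((closedBall (0:EuclideanSpace ℝ (Fin d)) 1).indicator
              fun x => ENNReal.ofReal (c₀ * f (infDist x E))) y ∂volume :=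
            setLIntegral_mono' measurableSet_ball (hGle k hk)
    -- per-term lower bound
    have htermval : ∀ k ∈ F,
        ENNReal.ofReal (c₁ * ((2*(K:ℝ)+1)^2)⁻¹ * ω') ≤ ENNReal.ofReal (Gk k) * volume (bl k) := by
      intro k hk
      have hkK := Finset.mem_Icc.mp hk
      have hvolk : volume (bl k) = ENNReal.ofReal ((sk k/8) ^ d) * ENNReal.ofReal ω' := by
        simp only [hbldef]
        exact hvol (Ctr k) (sk k/8) (div_nonneg (hsk0 k).le (by norm_num))
      rw [hvolk, ← mul_assoc, ← ENNReal.ofReal_mul (hGknn k),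
        ← ENNReal.ofReal_mul (mul_nonneg (hGknn k) (by positivity))]
      apply ENNReal.ofReal_le_ofReal
      have h2k : ((2:ℝ)^k) ≠ 0 := by positivity
      have hl2 : Real.log 2 ≠ 0 := ne_of_gt hlog2pos
      have hk1 : ((k:ℝ)+1) ≠ 0 := by positivity
      have heq : Gk k * ((sk k/8)^d) = c₁ * (((k:ℝ)+1)^2)⁻¹ := by
        simp only [hGkdef, hskdef, hc₁def]
        rw [div_pow, mul_pow, inv_pow]
        field_simp
      rw [heq]
      have hmono : ((2*(K:ℝ)+1)^2)⁻¹ ≤ (((k:ℝ)+1)^2)⁻¹ := by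
        apply inv_anti₀ (by positivity)
        have : (k:ℝ) ≤ 2*(K:ℝ) := by exact_mod_cast hkK.2
        nlinarith
      have h6 : c₁ * ((2*(K:ℝ)+1)^2)⁻¹ ≤ c₁ * (((k:ℝ)+1)^2)⁻¹ :=
        mul_le_mul_of_nonneg_left hmono hc₁pos.le
      exact mul_le_mul_of_nonneg_right h6 hωpos.le
    -- sum over the shells
    have hcard : F.card = K + 1 := by rw [hFdef, Nat.card_Icc]; omega
    have hsum : ((K:ℝ≥0∞) + 1) * ENNReal.ofReal (c₁ * ((2*(K:ℝ)+1)^2)⁻¹ * ω') ≤ ρ W := by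
      have hb := Finset.card_nsmul_le_sum F (fun k => ENNReal.ofReal (Gk k) * volume (bl k))
        (ENNReal.ofReal (c₁ * ((2*(K:ℝ)+1)^2)⁻¹ * ω')) htermval
      rw [hcard, nsmul_eq_mul] at hb
      have hUnion : ∑ k ∈ F, ρ (bl k) = ρ (⋃ k ∈ F, bl k) :=
        (measure_biUnion_finset hdisj (fun k _ => measurableSet_ball)).symm
      have hUsub : (⋃ k ∈ F, bl k) ⊆ W := by
        intro y hy
        rw [Set.mem_iUnion₂] at hy
        obtain ⟨k, hk, hyk⟩ := hy
        exact hWsub k hk hyk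
      calc ((K:ℝ≥0∞) + 1) * ENNReal.ofReal (c₁ * ((2*(K:ℝ)+1)^2)⁻¹ * ω')
          = ((K + 1 : ℕ) : ℝ≥0∞) * ENNReal.ofReal (c₁ * ((2*(K:ℝ)+1)^2)⁻¹ * ω') := by push_cast; ring
        _ ≤ ∑ k ∈ F, ENNReal.ofReal (Gk k) * volume (bl k) := hb
        _ ≤ ∑ k ∈ F, ρ (bl k) := Finset.sum_le_sum (fun k hk => hρball k hk)
        _ = ρ (⋃ k ∈ F, bl k) := hUnion
        _ ≤ ρ W := measure_mono hUsub
    -- lower bound of the integrand on W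
    have hpoint : ∀ x, W.indicator (fun _ => ENNReal.ofReal (R^2)) x ≤
        ENNReal.ofReal (dist (T θ x) (T 0 x) ^ 2) := by
      intro x
      by_cases hx : x ∈ W
      · rw [Set.indicator_of_mem hx]
        have hx' : (inner ℝ x (B 0) : ℝ) ≤ 0 ∧ 0 < (inner ℝ x (B θ) : ℝ) := hx
        obtain ⟨hx1, hx2⟩ := hx'
        rw [hT θ x, if_pos hx2, hT 0 x, if_neg (not_lt.mpr hx1)]
        apply ENNReal.ofReal_le_ofReal
        have hBB : B θ + B 0 = EuclideanSpace.single i0 (R * Real.sin θ + R * Real.sin 0) +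
            EuclideanSpace.single i1 (R * Real.cos θ + R * Real.cos 0) := by
          rw [hB1 θ, hB1 0]
          ext j
          simp only [PiLp.add_apply, EuclideanSpace.single_apply]
          split_ifs <;> ring
        have hd2 : dist (B θ) (-(B 0)) ^ 2 =
            (R*Real.sin θ + R*Real.sin 0)^2 + (R*Real.cos θ + R*Real.cos 0)^2 := by
          rw [dist_eq_norm, sub_neg_eq_add, hBB, aux_norm_sq hi01]
        rw [hd2]
        exact aux_dist_sq R θ hθ0.le hθh
      · rw [Set.indicator_of_notMem hx]; exact zero_le'
    have hstep1 : ENNReal.ofReal (R^2) * ρ W ≤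
        ∫⁻ x, ENNReal.ofReal (dist (T θ x) (T 0 x) ^ 2) ∂ρ := by
      rw [← lintegral_indicator_const hWmeas]
      exact lintegral_mono hpoint
    -- final chain
    have hP : (0:ℝ) < R^2 * c₁ * ω' := by positivity
    have hreal : c / Lg ≤ (R^2) * (c₁ * ((2*(K:ℝ)+1)^2)⁻¹ * ω') * ((K:ℝ)+1) := by
      have h0 := aux_real_ineq (R^2*c₁*ω') Lg K hP hLgpos hKub
      calc c / Lg = R^2*c₁*ω'/12/Lg := by rw [hcdef]
        _ ≤ R^2*c₁*ω' * ((2*(K:ℝ)+1)^2)⁻¹ * ((K:ℝ)+1) := h0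
        _ = (R^2) * (c₁ * ((2*(K:ℝ)+1)^2)⁻¹ * ω') * ((K:ℝ)+1) := by ring
    calc ENNReal.ofReal (c / Lg)
        ≤ ENNReal.ofReal ((R^2) * (c₁ * ((2*(K:ℝ)+1)^2)⁻¹ * ω') * ((K:ℝ)+1)) :=
          ENNReal.ofReal_le_ofReal hreal
      _ = ENNReal.ofReal (R^2) * (((K:ℝ≥0∞)+1) * ENNReal.ofReal (c₁ * ((2*(K:ℝ)+1)^2)⁻¹ * ω')) := by
          rw [ENNReal.ofReal_mul (by positivity), ENNReal.ofReal_mul (by positivity)]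
          rw [show ENNReal.ofReal ((K:ℝ)+1) = (K:ℝ≥0∞)+1 by
            rw [ENNReal.ofReal_add (by positivity) (by norm_num), ENNReal.ofReal_natCast,
              ENNReal.ofReal_one]]
          ring
      _ ≤ ENNReal.ofReal (R^2) * ρ W := mul_le_mul_right hsum _
      _ ≤ ∫⁻ x, ENNReal.ofReal (dist (T θ x) (T 0 x) ^ 2) ∂ρ := hstep1
  refine ⟨⟨c, hcpos, 1/2, ⟨by norm_num, by norm_num⟩, hmain⟩, ?_⟩
  intro α hα
  have hfin : ∀ θ : ℝ, (∫⁻ x, ENNReal.ofReal (dist (T θ x) (T 0 x) ^ 2) ∂ρ) ≠ ⊤ := by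
    intro θ
    have hBn : ∀ t : ℝ, ‖B t‖ = R := by
      intro t
      have h2 : ‖B t‖^2 = (R * Real.sin t)^2 + (R * Real.cos t)^2 := by
        rw [hB1 t]; exact aux_norm_sq hi01 _ _
      have h3 : ‖B t‖^2 = R^2 := by rw [h2]; nlinarith [Real.sin_sq_add_cos_sq t]
      have h4 := congrArg Real.sqrt h3
      rwa [Real.sqrt_sq (norm_nonneg _), Real.sqrt_sq hR.le] at h4
    have hub : ∀ x, ENNReal.ofReal (dist (T θ x) (T 0 x) ^ 2) ≤ ENNReal.ofReal ((2*R)^2) := by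
      intro x
      apply ENNReal.ofReal_le_ofReal
      have hTn : ∀ t : ℝ, ‖T t x‖ = R := by
        intro t
        rw [hT t x]
        split_ifs
        · exact hBn t
        · rw [norm_neg]; exact hBn t
      have h1 : dist (T θ x) (T 0 x) ≤ 2*R := by
        calc dist (T θ x) (T 0 x) ≤ ‖T θ x‖ + ‖T 0 x‖ := dist_le_norm_add_norm _ _
          _ = 2*R := by rw [hTn θ, hTn 0]; ring
      nlinarith [dist_nonneg (x := T θ x) (y := T 0 x)]
    have hle : (∫⁻ x, ENNReal.ofReal (dist (T θ x) (T 0 x) ^ 2) ∂ρ) ≤ ENNReal.ofReal ((2*R)^2) := by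
      calc (∫⁻ x, ENNReal.ofReal (dist (T θ x) (T 0 x) ^ 2) ∂ρ)
          ≤ ∫⁻ _, ENNReal.ofReal ((2*R)^2) ∂ρ := lintegral_mono hub
        _ = ENNReal.ofReal ((2*R)^2) := by rw [lintegral_const, measure_univ, mul_one]
    exact (lt_of_le_of_lt hle ENNReal.ofReal_lt_top).ne
  have hg0 : Filter.Tendsto (fun θ : ℝ => |Real.log (θ/4)| * θ^α)
      (nhdsWithin 0 (Set.Ioi 0)) (nhdsWithin 0 (Set.Ioi 0)) := by
    rw [tendsto_nhdsWithin_iff]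
    constructor
    · have h1 : Filter.Tendsto (fun θ:ℝ => Real.log θ * θ^α)
          (nhdsWithin 0 (Set.Ioi 0)) (nhds 0) := tendsto_log_mul_rpow_nhdsGT_zero hα
      have h2 : Filter.Tendsto (fun θ:ℝ => θ^α) (nhdsWithin 0 (Set.Ioi 0)) (nhds 0) := by
        have h3 := (Real.continuousAt_rpow_const 0 α (Or.inr hα.le)).tendsto
        rw [Real.zero_rpow hα.ne'] at h3
        exact h3.mono_left nhdsWithin_le_nhds
      have h3 : Filter.Tendsto (fun θ:ℝ => Real.log 4 * θ^α - Real.log θ * θ^α)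
          (nhdsWithin 0 (Set.Ioi 0)) (nhds 0) := by
        have h4 := (h2.const_mul (Real.log 4)).sub h1
        simpa using h4
      apply Filter.Tendsto.congr' _ h3
      filter_upwards [Ioo_mem_nhdsGT_of_mem (by norm_num : (0:ℝ) ∈ Set.Ico (0:ℝ) 1)] with θ hθ
      have hθ4 : (0:ℝ) < θ/4 := by linarith [hθ.1]
      have hlt : Real.log (θ/4) < 0 := Real.log_neg hθ4 (by nlinarith [hθ.2])
      rw [abs_of_neg hlt, Real.log_div (ne_of_gt hθ.1) (by norm_num)]
      ring
    · filter_upwards [Ioo_mem_nhdsGT_of_mem (by norm_num : (0:ℝ) ∈ Set.Ico (0:ℝ) 1)] with θ hθ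
      have hθ4 : (0:ℝ) < θ/4 := by linarith [hθ.1]
      have hlt : Real.log (θ/4) < 0 := Real.log_neg hθ4 (by nlinarith [hθ.2])
      exact mul_pos (abs_pos.mpr hlt.ne) (Real.rpow_pos_of_pos hθ.1 α)
  have hg : Filter.Tendsto (fun θ : ℝ => c * (|Real.log (θ/4)| * θ^α)⁻¹)
      (nhdsWithin 0 (Set.Ioi 0)) Filter.atTop := by
    have h5 := hg0.inv_tendsto_nhdsGT_zero
    have h6 : (fun θ : ℝ => (|Real.log (θ/4)| * θ^α)⁻¹) =
        (fun θ : ℝ => |Real.log (θ/4)| * θ^α)⁻¹ := rfl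
    rw [← h6] at h5
    exact Filter.Tendsto.const_mul_atTop hcpos h5
  apply Filter.tendsto_atTop_mono' _ _ hg
  filter_upwards [Ioo_mem_nhdsGT_of_mem (by norm_num : (0:ℝ) ∈ Set.Ico (0:ℝ) (1/2))] with θ hθ
  obtain ⟨hθ0, hθh⟩ := hθ
  have hL := hmain θ ⟨hθ0, hθh.le⟩
  have hθ4 : (0:ℝ) < θ/4 := by linarith
  have hlt : Real.log (θ/4) < 0 := Real.log_neg hθ4 (by nlinarith)
  have habs : 0 < |Real.log (θ/4)| := abs_pos.mpr hlt.ne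
  have hto : c / |Real.log (θ/4)| ≤
      (∫⁻ x, ENNReal.ofReal (dist (T θ x) (T 0 x) ^ 2) ∂ρ).toReal :=
    (ENNReal.ofReal_le_iff_le_toReal (hfin θ)).mp hL
  have hpow : 0 < θ^α := Real.rpow_pos_of_pos hθ0 α
  calc c * (|Real.log (θ/4)| * θ^α)⁻¹ = (c / |Real.log (θ/4)|) / θ^α := by
        rw [div_div]
        exact (div_eq_mul_inv _ _).symm
    _ ≤ (∫⁻ x, ENNReal.ofReal (dist (T θ x) (T 0 x) ^ 2) ∂ρ).toReal / θ^α := by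
        gcongr
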